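/- arXiv:cs/0207037 — 3 statements merged into one kernel-verified Lean document; each statement's English description precedes it below -/
import Mathlib

section
/- The relation ⊢_WBD satisfies (B↛D): for every information set Γ ⊆ L, every Ω ⊆ L_B, and every φ ∈ L_B, Γ ⊢_WBD φ̄ iff Γ_D ∪ Ω ⊢_WBD φ̄; and (D↛B): for every information set Γ ⊆ L, every Δ ⊆ L_D, and every φ ∈ L_B, Γ ⊢_WBD φ iff Γ_B ∪ Δ ⊢_WBD φ. -/
/-- Propositional formulas over a set of atoms `A`, with the usual connectives,
`⊥` and `⊤`. -/
inductive PLForm (A : Type) : Type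
  | atom   : A → PLForm A
  | falsum : PLForm A
  | verum  : PLForm A
  | neg    : PLForm A → PLForm A
  | conj   : PLForm A → PLForm A → PLForm A
  | disj   : PLForm A → PLForm A → PLForm A
  | impl   : PLForm A → PLForm A → PLForm A

/-- Evaluation of a propositional formula under a classical valuation. -/
def PLForm.eval {A : Type} (v : A → Bool) : PLForm A → Bool
  | .atom a   => v a
  | .falsum   => false
  | .verum    => true
  | .neg φ    => !(PLForm.eval v φ)
  | .conj φ ψ => PLForm.eval v φ && PLForm.eval v ψ
  | .disj φ ψ => PLForm.eval v φ || PLForm.eval v ψ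
  | .impl φ ψ => !(PLForm.eval v φ) || PLForm.eval v ψ

/-- Classical propositional consequence `X ⊢_PL φ`: every valuation satisfying
all members of `X` satisfies `φ`. -/
def PLCons {A : Type} (X : Set (PLForm A)) (φ : PLForm A) : Prop :=
  ∀ v : A → Bool, (∀ ψ ∈ X, PLForm.eval v ψ = true) → PLForm.eval v φ = true

/-- The language `L = L_B ∪ L_D`: a potential belief `φ` or a potential
disbelief `φ̄` for each propositional formula `φ`. -/
inductive LSent (A : Type) : Type
  | bel : PLForm A → LSent A
  | dis : PLForm A → LSent A

/-- The set of potential beliefs `L_B`. -/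
def LB (A : Type) : Set (LSent A) := Set.range LSent.bel

/-- The set of potential disbeliefs `L_D`. -/
def LD (A : Type) : Set (LSent A) := Set.range LSent.dis

/-- The propositional formulas believed in `Γ` (so that `Γ_B` corresponds to
`LSent.bel '' bels Γ = Γ ∩ LB A`). -/
def bels {A : Type} (Γ : Set (LSent A)) : Set (PLForm A) := {φ | LSent.bel φ ∈ Γ}

/-- The propositional formulas disbelieved in `Γ`. -/
def diss {A : Type} (Γ : Set (LSent A)) : Set (PLForm A) := {φ | LSent.dis φ ∈ Γ}

/-- The logic WBD: smallest relation closed under (B), (D⊥) and (WD). -/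
inductive WBD {A : Type} : Set (LSent A) → LSent A → Prop
  | B {Γ : Set (LSent A)} {φ : PLForm A} :
      PLCons (bels Γ) φ → WBD Γ (.bel φ)
  | Dbot {Γ : Set (LSent A)} {φ : PLForm A} :
      PLCons {φ} .falsum → WBD Γ (.dis φ)
  | WD {Γ : Set (LSent A)} {φ ψ : PLForm A} :
      LSent.dis ψ ∈ Γ → PLCons {φ} ψ → WBD Γ (.dis φ)

/-- The logic GBD: smallest relation closed under (B), (D⊥) and (GD). -/
inductive GBD {A : Type} : Set (LSent A) → LSent A → Prop
  | B {Γ : Set (LSent A)} {φ : PLForm A} :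
      PLCons (bels Γ) φ → GBD Γ (.bel φ)
  | Dbot {Γ : Set (LSent A)} {φ : PLForm A} :
      PLCons {φ} .falsum → GBD Γ (.dis φ)
  | GD {Γ : Set (LSent A)} {φ : PLForm A} :
      PLCons (PLForm.neg '' diss Γ) (.neg φ) → GBD Γ (.dis φ)

/-- The logic BD: smallest relation closed under (B), (D⊥) and (D). -/
inductive BD {A : Type} : Set (LSent A) → LSent A → Prop
  | B {Γ : Set (LSent A)} {φ : PLForm A} :
      PLCons (bels Γ) φ → BD Γ (.bel φ)
  | Dbot {Γ : Set (LSent A)} {φ : PLForm A} :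
      PLCons {φ} .falsum → BD Γ (.dis φ)
  | D {Γ : Set (LSent A)} {φ ψ : PLForm A} :
      LSent.dis ψ ∈ Γ → PLCons (insert φ (bels Γ)) ψ → BD Γ (.dis φ)

/-- The logic BN: smallest relation closed under (B), (D⊥), (WD) and (D→B). -/
inductive BN {A : Type} : Set (LSent A) → LSent A → Prop
  | B {Γ : Set (LSent A)} {φ : PLForm A} :
      PLCons (bels Γ) φ → BN Γ (.bel φ)
  | Dbot {Γ : Set (LSent A)} {φ : PLForm A} :
      PLCons {φ} .falsum → BN Γ (.dis φ)
  | WD {Γ : Set (LSent A)} {φ ψ : PLForm A} :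
      LSent.dis ψ ∈ Γ → PLCons {φ} ψ → BN Γ (.dis φ)
  | DtoB {Γ : Set (LSent A)} {φ : PLForm A} :
      BN Γ (.dis φ) → BN Γ (.bel (.neg φ))

/-- Satisfaction in a WBD-model `(M, 𝒩)` (also used for BD-models):
a belief `φ` holds iff `M ⊆ M(φ)`; a disbelief `φ̄` holds iff some
`N ∈ 𝒩` satisfies `N ⊆ M(¬φ)`. -/
def satWBD {A : Type} (M : Set (A → Bool)) (𝒩 : Set (Set (A → Bool))) :
    LSent A → Prop
  | .bel φ => ∀ v ∈ M, PLForm.eval v φ = true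
  | .dis φ => ∃ N ∈ 𝒩, ∀ v ∈ N, PLForm.eval v φ = false

/-- WBD-entailment: truth in all WBD-models (with `𝒩` nonempty) of `Γ`. -/
def WBDent {A : Type} (Γ : Set (LSent A)) (α : LSent A) : Prop :=
  ∀ (M : Set (A → Bool)) (𝒩 : Set (Set (A → Bool))), 𝒩.Nonempty →
    (∀ β ∈ Γ, satWBD M 𝒩 β) → satWBD M 𝒩 α

/-- Satisfaction in a GBD-model `(M, N)`. -/
def satGBD {A : Type} (M N : Set (A → Bool)) : LSent A → Prop
  | .bel φ => ∀ v ∈ M, PLForm.eval v φ = true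
  | .dis φ => ∀ v ∈ N, PLForm.eval v φ = false

/-- GBD-entailment: truth in all GBD-models of `Γ`. -/
def GBDent {A : Type} (Γ : Set (LSent A)) (α : LSent A) : Prop :=
  ∀ (M N : Set (A → Bool)), (∀ β ∈ Γ, satGBD M N β) → satGBD M N α

/-- BD-entailment: truth in all BD-models of `Γ`, i.e. WBD-models where
every `N ∈ 𝒩` is a subset of `M`. -/
def BDent {A : Type} (Γ : Set (LSent A)) (α : LSent A) : Prop :=
  ∀ (M : Set (A → Bool)) (𝒩 : Set (Set (A → Bool))), 𝒩.Nonempty →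
    (∀ N ∈ 𝒩, N ⊆ M) → (∀ β ∈ Γ, satWBD M 𝒩 β) → satWBD M 𝒩 α

/-- `Γ` is B-inconsistent iff `Γ_B ⊢_BD ⊥`. -/
def BIncons {A : Type} (Γ : Set (LSent A)) : Prop :=
  BD (Γ ∩ LB A) (.bel .falsum)

/-- `Γ` is D-inconsistent iff `Γ_D ⊢_BD ⊤̄`. -/
def DIncons {A : Type} (Γ : Set (LSent A)) : Prop :=
  BD (Γ ∩ LD A) (.dis .verum)

/-- `Γ` is BD-inconsistent iff `Γ ⊢_BD φ` and `Γ ⊢_BD φ̄` for some `φ ∈ L_B`. -/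
def BDIncons {A : Type} (Γ : Set (LSent A)) : Prop :=
  ∃ φ : PLForm A, BD Γ (.bel φ) ∧ BD Γ (.dis φ)

/-
Derivability of a disbelief in WBD depends on `Γ` only through the disbeliefs of `Γ`, and
derivability of a belief only through its beliefs, since each rule reads just one of the two
halves. Restricting `Γ` to one half and adding sentences of the other kind leaves that half unchanged.
-/

section

variable {A : Type}

theorem bels_union (Γ Δ : Set (LSent A)) : bels (Γ ∪ Δ) = bels Γ ∪ bels Δ := rfl

theorem diss_union (Γ Δ : Set (LSent A)) : diss (Γ ∪ Δ) = diss Γ ∪ diss Δ := rfl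

theorem bels_inter_LB (Γ : Set (LSent A)) : bels (Γ ∩ LB A) = bels Γ := by
  ext φ
  exact and_iff_left ⟨φ, rfl⟩

theorem diss_inter_LD (Γ : Set (LSent A)) : diss (Γ ∩ LD A) = diss Γ := by
  ext φ
  exact and_iff_left ⟨φ, rfl⟩

theorem bels_eq_empty_of_subset_LD {Δ : Set (LSent A)} (hΔ : Δ ⊆ LD A) : bels Δ = ∅ :=
  Set.eq_empty_of_forall_notMem fun _ h => by
    obtain ⟨_, h⟩ := hΔ h
    cases h

theorem diss_eq_empty_of_subset_LB {Ω : Set (LSent A)} (hΩ : Ω ⊆ LB A) : diss Ω = ∅ :=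
  Set.eq_empty_of_forall_notMem fun _ h => by
    obtain ⟨_, h⟩ := hΩ h
    cases h

namespace WBD

theorem bel_iff {Γ : Set (LSent A)} {φ : PLForm A} : WBD Γ (.bel φ) ↔ PLCons (bels Γ) φ :=
  ⟨fun | B h => h, B⟩

theorem dis_iff {Γ : Set (LSent A)} {φ : PLForm A} :
    WBD Γ (.dis φ) ↔ PLCons {φ} .falsum ∨ ∃ ψ ∈ diss Γ, PLCons {φ} ψ :=
  ⟨fun | Dbot h => .inl h | WD hψ h => .inr ⟨_, hψ, h⟩,
    fun | .inl h => Dbot h | .inr ⟨_, hψ, h⟩ => WD hψ h⟩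

end WBD

end

/-- `⊢_WBD` satisfies (B↛D) and (D↛B). -/
theorem wbd_decoupled (A : Type) :
    (∀ (Γ Ω : Set (LSent A)), Ω ⊆ LB A → ∀ φ : PLForm A,
      (WBD Γ (.dis φ) ↔ WBD ((Γ ∩ LD A) ∪ Ω) (.dis φ))) ∧
    (∀ (Γ Δ : Set (LSent A)), Δ ⊆ LD A → ∀ φ : PLForm A,
      (WBD Γ (.bel φ) ↔ WBD ((Γ ∩ LB A) ∪ Δ) (.bel φ))) := by
  constructor
  · intro Γ Ω hΩ φ
    rw [WBD.dis_iff, WBD.dis_iff, diss_union, diss_inter_LD, diss_eq_empty_of_subset_LB hΩ,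
      Set.union_empty]
  · intro Γ Δ hΔ φ
    rw [WBD.bel_iff, WBD.bel_iff, bels_union, bels_inter_LB, bels_eq_empty_of_subset_LD hΔ,
      Set.union_empty]
end

section
/- Soundness and completeness of GBD: for every information set Γ ⊆ L and every α ∈ L, Γ ⊢_GBD α iff Γ ⊨_GBD α. -/
/-!
A set `Γ` is satisfied by `(M, N)` exactly when `M ⊆ M(Γ_B)` and `N ⊆ M(¬Γ̄_D)`, and
satisfaction is antitone in both components, so `Γ ⊨_GBD α` holds iff the largest model
`(M(Γ_B), M(¬Γ̄_D))` of `Γ` satisfies `α`. Unfolded, truth of `φ` resp. `φ̄` in that model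
is literally the premise of rule (B) resp. (GD); rule (D⊥) is a special case of (GD).
-/

section PL

variable {A : Type}

@[simp]
theorem PLForm.eval_neg (v : A → Bool) (φ : PLForm A) :
    PLForm.eval v (.neg φ) = !PLForm.eval v φ := rfl

theorem plCons_neg_image_iff (X : Set (PLForm A)) (φ : PLForm A) :
    PLCons (PLForm.neg '' X) (.neg φ) ↔
      ∀ v : A → Bool, (∀ ψ ∈ X, PLForm.eval v ψ = false) → PLForm.eval v φ = false := by
  simp [PLCons]

theorem plCons_neg_of_plCons_falsum {φ : PLForm A} (h : PLCons {φ} .falsum) (X : Set (PLForm A)) :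
    PLCons X (.neg φ) := by
  intro v _
  cases hφ : PLForm.eval v φ
  · simp [hφ]
  · simpa [PLForm.eval] using h v (by simpa using hφ)

end PL

namespace GBD

variable {A : Type}

theorem bel_iff {Γ : Set (LSent A)} {φ : PLForm A} :
    GBD Γ (.bel φ) ↔ PLCons (bels Γ) φ :=
  ⟨fun | .B h => h, .B⟩

theorem dis_iff {Γ : Set (LSent A)} {φ : PLForm A} :
    GBD Γ (.dis φ) ↔ PLCons (PLForm.neg '' diss Γ) (.neg φ) :=
  ⟨fun | .Dbot h => plCons_neg_of_plCons_falsum h _ | .GD h => h, .GD⟩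

/-- The valuations satisfying every belief of `Γ`, i.e. `M(Γ_B)`. -/
def beliefModels (Γ : Set (LSent A)) : Set (A → Bool) :=
  {v | ∀ φ ∈ bels Γ, PLForm.eval v φ = true}

/-- The valuations falsifying every disbelief of `Γ`, i.e. `M(¬Γ̄_D)`. -/
def disbeliefCountermodels (Γ : Set (LSent A)) : Set (A → Bool) :=
  {v | ∀ φ ∈ diss Γ, PLForm.eval v φ = false}

theorem satGBD_anti {M M' N N' : Set (A → Bool)} (hM : M' ⊆ M) (hN : N' ⊆ N) :
    ∀ {α : LSent A}, satGBD M N α → satGBD M' N' α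
  | .bel _, h => fun v hv => h v (hM hv)
  | .dis _, h => fun v hv => h v (hN hv)

theorem satGBD_set_iff {Γ : Set (LSent A)} {M N : Set (A → Bool)} :
    (∀ β ∈ Γ, satGBD M N β) ↔ M ⊆ beliefModels Γ ∧ N ⊆ disbeliefCountermodels Γ := by
  constructor
  · intro h
    exact ⟨fun v hv φ hφ => h (.bel φ) hφ v hv, fun v hv φ hφ => h (.dis φ) hφ v hv⟩
  · rintro ⟨hM, hN⟩ (φ | φ) hβ
    · exact fun v hv => hM hv φ hβ
    · exact fun v hv => hN hv φ hβ

theorem gbdEnt_iff_satGBD_largest {Γ : Set (LSent A)} {α : LSent A} :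
    GBDent Γ α ↔ satGBD (beliefModels Γ) (disbeliefCountermodels Γ) α := by
  constructor
  · exact fun h => h _ _ (satGBD_set_iff.2 ⟨subset_rfl, subset_rfl⟩)
  · intro h M N hΓ
    obtain ⟨hM, hN⟩ := satGBD_set_iff.1 hΓ
    exact satGBD_anti hM hN h

theorem iff_satGBD_largest {Γ : Set (LSent A)} :
    ∀ {α : LSent A}, GBD Γ α ↔ satGBD (beliefModels Γ) (disbeliefCountermodels Γ) α
  | .bel _ => bel_iff
  | .dis _ => dis_iff.trans (plCons_neg_image_iff _ _)

end GBD

/-- Soundness and completeness of GBD. -/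
theorem gbd_sound_complete (A : Type) (Γ : Set (LSent A)) (α : LSent A) :
    GBD Γ α ↔ GBDent Γ α :=
  GBD.iff_satGBD_largest.trans GBD.gbdEnt_iff_satGBD_largest.symm
end

section
/- The logic GBD satisfies the property (D∨): for every information set Γ ⊆ L and all φ, ψ ∈ L_B, if Γ ⊢_GBD φ̄ and Γ ⊢_GBD ψ̄ then Γ ⊢_GBD (φ ∨ ψ)‾. -/
/-!
Rule (D⊥) is subsumed by (GD): if `φ` is unsatisfiable then `¬φ` is valid, so it follows from
any premises. Hence `Γ ⊢ φ̄` holds exactly when `Γ̄_D ⊢_PL ¬φ`, and (D∨) reduces to the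
classical fact that `¬φ` and `¬ψ` together entail `¬(φ ∨ ψ)`.
-/

namespace PLCons

variable {A : Type} {X : Set (PLForm A)} {φ ψ : PLForm A}

theorem neg_of_unsat (h : PLCons {φ} .falsum) : PLCons X (.neg φ) := by
  intro v _
  cases hφ : PLForm.eval v φ
  · simp [PLForm.eval, hφ]
  · simpa [PLForm.eval] using h v (by simpa using hφ)

theorem neg_disj (hφ : PLCons X (.neg φ)) (hψ : PLCons X (.neg ψ)) :
    PLCons X (.neg (.disj φ ψ)) := by
  intro v hv
  simpa [PLForm.eval] using And.intro (hφ v hv) (hψ v hv)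

end PLCons

theorem GBD.dis_iff_s7 {A : Type} {Γ : Set (LSent A)} {φ : PLForm A} :
    GBD Γ (.dis φ) ↔ PLCons (PLForm.neg '' diss Γ) (.neg φ) := by
  refine ⟨fun h => ?_, GBD.GD⟩
  cases h with
  | Dbot h => exact PLCons.neg_of_unsat h
  | GD h => exact h

/-- GBD satisfies (D∨): if `Γ ⊢ φ̄` and `Γ ⊢ ψ̄` then `Γ ⊢ (φ ∨ ψ)‾`. -/
theorem gbd_dvee (A : Type) (Γ : Set (LSent A)) (φ ψ : PLForm A)
    (h1 : GBD Γ (.dis φ)) (h2 : GBD Γ (.dis ψ)) :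
    GBD Γ (.dis (.disj φ ψ)) :=
  GBD.dis_iff_s7.mpr (.neg_disj (GBD.dis_iff_s7.mp h1) (GBD.dis_iff_s7.mp h2))
end
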